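/- arXiv:1801.10142 — 2 statements merged into one kernel-verified Lean document; each statement's English description precedes it below -/
import Mathlib

section
/- Let S be the set of vectors v ∈ ℂ^{2^r} that are invariant under all coordinate permutations induced by permutations of the r tensor factors (i.e., v_x = v_y whenever bit strings x, y ∈ {0,1}^r have the same Hamming weight). Then S = span{θ_r(α) : α ∈ ℝ}, where θ_r(α)_x = e^{i|x|α}. -/
open Real Complex

namespace ThetaAux
variable (r : ℕ)

def wt (x : Fin r → Bool) : ℕ := (Finset.univ.filter fun i => x i = true).card

lemma wt_le (x : Fin r → Bool) : wt r x ≤ r := by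
  simpa [wt] using (Finset.card_filter_le Finset.univ _).trans (by simp)

noncomputable def theta (α : ℝ) : (Fin r → Bool) → ℂ :=
  fun x => Complex.exp (Complex.I * (wt r x : ℂ) * (α : ℂ))

noncomputable def ang (j : Fin (r+1)) : ℝ := 2 * Real.pi * j / (r+1)

noncomputable def vdm : Fin (r+1) → ℂ :=
  fun j => Complex.exp (2 * Real.pi * Complex.I / (r+1)) ^ (j : ℕ)

lemma vdm_inj : Function.Injective (vdm r) := by
  intro j k h
  have hprim := Complex.isPrimitiveRoot_exp (r+1) (Nat.succ_ne_zero r)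
  have h' : Complex.exp (2 * Real.pi * Complex.I / (r+1)) ^ (j:ℕ)
      = Complex.exp (2 * Real.pi * Complex.I / (r+1)) ^ (k:ℕ) := by
    simpa [vdm] using h
  exact Fin.ext (hprim.pow_inj j.isLt k.isLt (by exact_mod_cast h'))

lemma vdm_theta (j : Fin (r+1)) (x : Fin r → Bool) :
    theta r (ang r j) x = vdm r j ^ (wt r x) := by
  rw [vdm, ← pow_mul, ← Complex.exp_nat_mul, theta, ang]
  congr 1
  have h0 : ((r:ℂ)+1) ≠ 0 := by
    have := Nat.cast_add_one_ne_zero (R := ℂ) r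
    exact_mod_cast this
  push_cast
  field_simp

noncomputable def M : Matrix (Fin (r+1)) (Fin (r+1)) ℂ := Matrix.vandermonde (vdm r)

lemma detM : IsUnit (M r).det := by
  rw [isUnit_iff_ne_zero, M, Matrix.det_vandermonde]
  refine Finset.prod_ne_zero_iff.mpr fun i _ => Finset.prod_ne_zero_iff.mpr fun j hj => ?_
  rw [Finset.mem_Ioi] at hj
  exact sub_ne_zero.mpr fun h => (hj.ne' (vdm_inj r h)).elim

noncomputable def chi (w : Fin (r+1)) : (Fin r → Bool) → ℂ :=
  fun x => if (wt r x : ℕ) = (w : ℕ) then 1 else 0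

lemma chi_eq (w : Fin (r+1)) :
    chi r w = ∑ j : Fin (r+1), (M r)⁻¹ w j • theta r (ang r j) := by
  funext x
  have hlt : wt r x < r + 1 := Nat.lt_succ_of_le (wt_le r x)
  have key : ∑ j, (M r)⁻¹ w j * (M r) j ⟨wt r x, hlt⟩ = (1 : Matrix (Fin (r+1)) (Fin (r+1)) ℂ) w ⟨wt r x, hlt⟩ := by
    rw [← Matrix.mul_apply, Matrix.nonsing_inv_mul (M r) (detM r)]
  simp only [Finset.sum_apply, Pi.smul_apply, smul_eq_mul]
  have : ∀ j, theta r (ang r j) x = (M r) j ⟨wt r x, hlt⟩ := by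
    intro j; rw [vdm_theta]; simp [M, Matrix.vandermonde]
  simp only [this]
  rw [key, Matrix.one_apply, chi]
  simp [Fin.ext_iff, eq_comm]

def rep (w : Fin (r+1)) : Fin r → Bool := fun i => decide ((i : ℕ) < (w : ℕ))

lemma wt_rep (w : Fin (r+1)) : wt r (rep r w) = (w : ℕ) := by
  have hw : (w : ℕ) ≤ r := Nat.lt_succ_iff.mp w.isLt
  rw [wt]
  simp only [rep, decide_eq_true_eq]
  rw [← Finset.card_range (w : ℕ)]
  refine Finset.card_bij' (fun i _ => (i : ℕ)) (fun m hm => ⟨m, lt_of_lt_of_le (Finset.mem_range.mp hm) hw⟩) ?_ ?_ ?_ ?_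
  · intro i hi; simp at hi ⊢; exact hi
  · intro m hm; simpa using Finset.mem_range.mp hm
  · intro i hi; simp
  · intro m hm; simp

lemma rep_spec (v : (Fin r → Bool) → ℂ)
    (hv : ∀ x y, wt r x = wt r y → v x = v y) :
    v = ∑ w : Fin (r+1), v (rep r w) • chi r w := by
  funext x
  have hlt : wt r x < r + 1 := Nat.lt_succ_of_le (wt_le r x)
  simp only [Finset.sum_apply, Pi.smul_apply, smul_eq_mul, chi, mul_ite, mul_one, mul_zero]
  rw [Finset.sum_eq_single (⟨wt r x, hlt⟩ : Fin (r+1))]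
  · simp only [if_pos rfl]
    exact hv _ _ (by rw [wt_rep])
  · intro b _ hb
    rw [if_neg]
    intro h; exact hb (Fin.ext h.symm)
  · intro h; exact absurd (Finset.mem_univ _) h

end ThetaAux

open ThetaAux in
theorem symmetric_vectors_eq_theta_span (r : ℕ) :
    {v : (Fin r → Bool) → ℂ | ∀ x y : Fin r → Bool,
        (Finset.univ.filter fun i => x i = true).card = (Finset.univ.filter fun i => y i = true).card
        → v x = v y}
    = ↑(Submodule.span ℂ (Set.range (fun (α : ℝ) =>
        fun x : Fin r → Bool =>
          Complex.exp (Complex.I * ((Finset.univ.filter fun i => x i = true).card : ℂ) * (α : ℂ))))) := by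
  have hrange : (Set.range (fun (α : ℝ) =>
      fun x : Fin r → Bool =>
        Complex.exp (Complex.I * ((Finset.univ.filter fun i => x i = true).card : ℂ) * (α : ℂ))))
      = Set.range (theta r) := rfl
  rw [hrange]
  apply Set.Subset.antisymm
  · -- symmetric ⊆ span
    intro v hv
    rw [rep_spec r v hv]
    refine Submodule.sum_mem _ fun w _ => Submodule.smul_mem _ _ ?_
    rw [chi_eq]
    exact Submodule.sum_mem _ fun j _ =>
      Submodule.smul_mem _ _ (Submodule.subset_span ⟨ang r j, rfl⟩)
  · -- span ⊆ symmetric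
    let P : Submodule ℂ ((Fin r → Bool) → ℂ) :=
      { carrier := {v | ∀ x y : Fin r → Bool, wt r x = wt r y → v x = v y}
        add_mem' := fun ha hb x y h => by simp [ha x y h, hb x y h]
        zero_mem' := fun x y h => rfl
        smul_mem' := fun c v hv x y h => by simp [hv x y h] }
    have : Submodule.span ℂ (Set.range (theta r)) ≤ P := by
      rw [Submodule.span_le]
      rintro _ ⟨α, rfl⟩ x y h
      simp only [theta, h]
    exact fun v hv => this hv
end

section
/- Let V = ℂ^{2^r} and for α ∈ ℝ let θ_r(α) ∈ V be the vector with entries e^{i|x|α} (x ∈ {0,1}^r, |x| the Hamming weight). Then for any T ⊆ ℝ/2πℤ of cardinality r+1 consisting of distinct classes, and any linear maps D₁, D₂ : V → ℂ^{2^n}: (∀α ∈ T, D₁θ_r(α) = D₂θ_r(α)) implies (∀α ∈ ℝ, D₁θ_r(α) = D₂θ_r(α)). -/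
/-!
Writing `z = e^{iα}`, the vector `θ_r(α)` is obtained from the power vector `(1, z, …, z^r)` by the
linear map that copies coordinate `k` to every `x` of Hamming weight `k`. Power vectors of `r + 1`
distinct numbers are the rows of an invertible Vandermonde matrix, so they span `ℂ^{r+1}`; hence
`D₁` and `D₂`, composed with that copying map, agree everywhere as soon as they agree on the samples.
-/

open Real Complex

def powerVector {K : Type*} [Monoid K] (m : ℕ) (z : K) : Fin m → K := fun k => z ^ (k : ℕ)

theorem span_range_powerVector {K : Type*} [Field K] {m : ℕ} {z : Fin m → K}
    (hz : Function.Injective z) :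
    Submodule.span K (Set.range fun j => powerVector m (z j)) = ⊤ :=
  (Matrix.linearIndependent_rows_of_det_ne_zero (Matrix.det_vandermonde_ne_zero_iff.mpr hz))
    |>.span_eq_top_of_card_eq_finrank' (by simp)

theorem LinearMap.eq_of_eq_on_powerVector {K M : Type*} [Field K] [AddCommGroup M] [Module K M]
    {m : ℕ} {z : Fin m → K} (hz : Function.Injective z) {f g : (Fin m → K) →ₗ[K] M}
    (h : ∀ j, f (powerVector m (z j)) = g (powerVector m (z j))) : f = g :=
  LinearMap.ext_on_range (span_range_powerVector hz) h

def hammingWeight {r : ℕ} (x : Fin r → Bool) : Fin (r + 1) :=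
  ⟨(Finset.univ.filter fun i => x i = true).card,
    Nat.lt_succ_of_le ((Finset.card_filter_le _ _).trans (Finset.card_fin r).le)⟩

theorem exp_I_mul_card_mul_eq_pow_hammingWeight {r : ℕ} (α : ℝ) (x : Fin r → Bool) :
    Complex.exp (Complex.I * ((Finset.univ.filter fun i => x i = true).card : ℂ) * (α : ℂ)) =
      (Circle.exp α : ℂ) ^ (hammingWeight x : ℕ) := by
  rw [Circle.coe_exp, ← Complex.exp_nat_mul]
  simp only [hammingWeight]
  ring_nf

theorem Circle.exp_injective_of_not_modEq {ι : Type*} {α : ι → ℝ}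
    (hα : ∀ j k, j ≠ k → ¬ ∃ m : ℤ, α j = α k + m * (2 * π)) :
    Function.Injective fun j => Circle.exp (α j) :=
  fun j k hjk => by_contra fun hne => hα j k hne (Circle.exp_eq_exp.mp hjk)

theorem finite_angle_case_reasoning (r n : ℕ)
    (θ : ℝ → ((Fin r → Bool) → ℂ))
    (hθ : ∀ (α : ℝ) (x : Fin r → Bool),
      θ α x = Complex.exp (Complex.I * ((Finset.univ.filter fun i => x i = true).card : ℂ) * (α : ℂ)))
    (α : Fin (r + 1) → ℝ)
    (hdist : ∀ j k : Fin (r + 1), j ≠ k → ¬ ∃ m : ℤ, α j = α k + m * (2 * π))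
    (D₁ D₂ : ((Fin r → Bool) → ℂ) →ₗ[ℂ] ((Fin n → Bool) → ℂ))
    (h : ∀ j : Fin (r + 1), D₁ (θ (α j)) = D₂ (θ (α j))) :
    ∀ β : ℝ, D₁ (θ β) = D₂ (θ β) := by
  set copy : (Fin (r + 1) → ℂ) →ₗ[ℂ] ((Fin r → Bool) → ℂ) :=
    LinearMap.funLeft ℂ ℂ hammingWeight
  have hθ_eq : ∀ γ : ℝ, θ γ = copy (powerVector (r + 1) (Circle.exp γ : ℂ)) := fun γ => by
    funext x
    rw [hθ, exp_I_mul_card_mul_eq_pow_hammingWeight]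
    rfl
  have hz : Function.Injective fun j => (Circle.exp (α j) : ℂ) :=
    Subtype.val_injective.comp (Circle.exp_injective_of_not_modEq hdist)
  have hcomp : D₁ ∘ₗ copy = D₂ ∘ₗ copy :=
    LinearMap.eq_of_eq_on_powerVector hz fun j => by
      simpa only [LinearMap.comp_apply, hθ_eq] using h j
  intro β
  rw [hθ_eq]
  exact LinearMap.congr_fun hcomp _
end
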